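/- arXiv:1604.02885 — 3 statements merged into one kernel-verified Lean document; each statement's English description precedes it below -/
import Mathlib

section
/- Let c_i^ℓ ∈ ℝ for i ∈ {0,...,N}, ℓ ∈ L be arbitrary costs. Define the iterative transformation, for i from N down to 0: c_{i-1}^f ← c_{i-1}^f + max_{ℓ'} c_i^{ℓ'} and c_i^ℓ ← c_i^ℓ − max_{ℓ'} c_i^{ℓ'} for all ℓ (with the update at i = 0 adding the constant max_{ℓ'} c_0^{ℓ'} to a global offset). Then after the transformation all costs c_i^ℓ are non-positive, and for every assignment of binary variables satisfying the visibility consistency identity y_{i-1}^f = ∑_{ℓ∈L} y_i^ℓ (with y_{-1}^f = 1), the value ∑_{i,ℓ} c_i^ℓ y_i^ℓ changes by exactly the accumulated constant, independent of the assignment. -/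
/-!
Shifting the amount `M = max_ℓ c_i^ℓ` from position `i` to the free-space cost at position
`i - 1` changes the objective by `M (y_{i-1}^f - ∑_ℓ y_i^ℓ)`, which vanishes on consistent
assignments; at `i = 0` it changes it by `-M ∑_ℓ y_0^ℓ = -M`, a constant. Each step makes the
costs at its own position non-positive, and later steps only touch lower positions.
-/

/-- One step of the cost transformation at position `i`: subtract
`max_{ℓ'} c_i^{ℓ'}` from all costs at position `i` and add it to the
free-space cost at position `i-1` (at `i = 0` the shifted amount becomes a
global constant, which disappears since there is no position `-1`). -/
noncomputable def rayStep (L : ℕ) (c : ℕ → Fin (L + 1) → ℝ) (i : ℕ) :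
    ℕ → Fin (L + 1) → ℝ := fun j ℓ =>
  if j = i then c i ℓ - Finset.univ.sup' Finset.univ_nonempty (c i)
  else if j + 1 = i ∧ ℓ = 0 then c j ℓ + Finset.univ.sup' Finset.univ_nonempty (c i)
  else c j ℓ

/-- Apply the steps for `i = N, N-1, …, 0` in this order. -/
noncomputable def rayTransform (L : ℕ) : ℕ → (ℕ → Fin (L + 1) → ℝ) → ℕ → Fin (L + 1) → ℝ
  | 0, c => rayStep L c 0
  | k + 1, c => rayTransform L k (rayStep L c (k + 1))

open Finset

def rayObjective {L : ℕ} (N : ℕ) (c y : ℕ → Fin (L + 1) → ℝ) : ℝ :=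
  ∑ i ∈ range (N + 1), ∑ ℓ, c i ℓ * y i ℓ

section

variable {L : ℕ} (c : ℕ → Fin (L + 1) → ℝ)

lemma rayStep_apply (i j : ℕ) (ℓ : Fin (L + 1)) :
    rayStep L c i j ℓ = c j ℓ - (if j = i then univ.sup' univ_nonempty (c i) else 0)
      + (if j + 1 = i ∧ ℓ = 0 then univ.sup' univ_nonempty (c i) else 0) := by
  unfold rayStep
  split_ifs <;> grind

lemma rayStep_self_nonpos (i : ℕ) (ℓ : Fin (L + 1)) : rayStep L c i i ℓ ≤ 0 := by
  simp only [rayStep]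
  exact sub_nonpos.mpr (le_sup' (c i) (mem_univ ℓ))

lemma rayTransform_of_lt {k j : ℕ} (h : k < j) : rayTransform L k c j = c j := by
  induction k generalizing c with
  | zero => funext ℓ; simp [rayTransform, rayStep, h.ne']
  | succ k ih =>
    rw [rayTransform, ih _ (by omega)]
    funext ℓ
    simp [rayStep, h.ne', show j ≠ k by omega]

lemma rayTransform_nonpos (k : ℕ) : ∀ i ≤ k, ∀ ℓ, rayTransform L k c i ℓ ≤ 0 := by
  induction k generalizing c with
  | zero =>
    intro i hi ℓ
    obtain rfl : i = 0 := by omega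
    exact rayStep_self_nonpos c 0 ℓ
  | succ k ih =>
    intro i hi ℓ
    obtain hik | rfl := Nat.lt_or_eq_of_le hi
    · exact ih _ i (Nat.le_of_lt_succ hik) ℓ
    · rw [rayTransform, rayTransform_of_lt _ (Nat.lt_succ_self k)]
      exact rayStep_self_nonpos c (k + 1) ℓ

variable (y : ℕ → Fin (L + 1) → ℝ) {N : ℕ}

lemma rayObjective_rayStep_succ {i : ℕ} (hi : i + 1 ≤ N) :
    rayObjective N (rayStep L c (i + 1)) y = rayObjective N c y
      + univ.sup' univ_nonempty (c (i + 1)) * (y i 0 - ∑ ℓ, y (i + 1) ℓ) := by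
  simp only [rayObjective, rayStep_apply, add_mul, sub_mul, sum_add_distrib, sum_sub_distrib,
    ite_mul, zero_mul, Nat.add_right_cancel_iff, ite_and, sum_ite_eq', sum_ite_irrel,
    sum_const_zero, mem_univ, if_true, mem_range, ← mul_sum, show i + 1 < N + 1 by omega,
    show i < N + 1 by omega]
  ring

lemma rayObjective_rayStep_zero :
    rayObjective N (rayStep L c 0) y = rayObjective N c y
      - univ.sup' univ_nonempty (c 0) * ∑ ℓ, y 0 ℓ := by
  simp [rayObjective, rayStep_apply, sub_mul, sum_sub_distrib, ite_mul, mul_sum]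


lemma exists_rayObjective_rayTransform_eq_add {k : ℕ} (hk : k ≤ N) :
    ∃ K : ℝ, ∀ y : ℕ → Fin (L + 1) → ℝ, (∑ ℓ, y 0 ℓ) = 1 →
      (∀ i, i + 1 ≤ N → (∑ ℓ, y (i + 1) ℓ) = y i 0) →
      rayObjective N (rayTransform L k c) y = rayObjective N c y + K := by
  induction k generalizing c with
  | zero =>
    refine ⟨-univ.sup' univ_nonempty (c 0), fun y hy₀ _ => ?_⟩
    rw [rayTransform, rayObjective_rayStep_zero, hy₀]
    ring
  | succ k ih =>
    obtain ⟨K, hK⟩ := ih (rayStep L c (k + 1)) (by omega)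
    refine ⟨K, fun y hy₀ hcons => ?_⟩
    rw [rayTransform, hK y hy₀ hcons, rayObjective_rayStep_succ c y hk, hcons k hk, sub_self,
      mul_zero, add_zero]

end

/-- after the transformation all costs at positions `0,…,N` are
non-positive, and on every binary assignment satisfying the visibility
consistency identity `y_{i-1}^f = ∑_ℓ y_i^ℓ` (with `y_{-1}^f = 1`) the objective
changes by exactly a constant `K` independent of the assignment. -/
theorem stmt4 (L N : ℕ) (c : ℕ → Fin (L + 1) → ℝ) :
    (∀ i ≤ N, ∀ ℓ, rayTransform L N c i ℓ ≤ 0) ∧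
    ∃ K : ℝ, ∀ y : ℕ → Fin (L + 1) → ℝ,
      (∀ i ℓ, y i ℓ = 0 ∨ y i ℓ = 1) →
      (∑ ℓ, y 0 ℓ) = 1 →
      (∀ i, i + 1 ≤ N → (∑ ℓ, y (i + 1) ℓ) = y i 0) →
      (∑ i ∈ Finset.range (N + 1), ∑ ℓ, rayTransform L N c i ℓ * y i ℓ)
        = (∑ i ∈ Finset.range (N + 1), ∑ ℓ, c i ℓ * y i ℓ) + K := by
  obtain ⟨K, hK⟩ := exists_rayObjective_rayTransform_eq_add c le_rfl
  exact ⟨rayTransform_nonpos c N, K, fun y _ hy₀ hcons => hK y hy₀ hcons⟩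
end

section
/- Suppose all costs c_i^ℓ ≤ 0. Then the minimization of ∑_{i,ℓ} c_i^ℓ y_i^ℓ subject to the equality constraints y_i^ℓ = min(y_{i-1}^f, x_i^ℓ) (with y_{-1}^f = 1 and x_i^ℓ ∈ [0,1] fixed) has the same optimal value as the minimization subject to the relaxed inequality constraints 0 ≤ y_i^ℓ, y_i^ℓ ≤ y_{i-1}^f, y_i^ℓ ≤ x_i^ℓ; moreover an optimal solution of the relaxed problem is obtained by setting y_i^ℓ = min(y_{i-1}^f, x_i^ℓ). -/
/-- with non-positive costs, the assignment
`Y i ℓ = min (Y (i-1) 0) (x i ℓ)` (with `y_{-1}^f = 1`) is feasible for the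
relaxed inequality constraints `0 ≤ y ≤ y_{i-1}^f`, `y ≤ x`, and is optimal
among all relaxed-feasible assignments; hence the equality-constrained and the
relaxed minimizations have the same optimal value. -/
theorem stmt5 (L N : ℕ) (c : ℕ → Fin (L + 1) → ℝ)
    (hc : ∀ i ≤ N, ∀ ℓ, c i ℓ ≤ 0)
    (x : ℕ → Fin (L + 1) → ℝ)
    (hx : ∀ i ≤ N, ∀ ℓ, x i ℓ ∈ Set.Icc (0 : ℝ) 1)
    (Y : ℕ → Fin (L + 1) → ℝ)
    (hY0 : ∀ ℓ, Y 0 ℓ = min 1 (x 0 ℓ))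
    (hYs : ∀ i ℓ, Y (i + 1) ℓ = min (Y i 0) (x (i + 1) ℓ)) :
    (∀ ℓ, 0 ≤ Y 0 ℓ ∧ Y 0 ℓ ≤ 1 ∧ Y 0 ℓ ≤ x 0 ℓ) ∧
    (∀ i, i + 1 ≤ N → ∀ ℓ, 0 ≤ Y (i + 1) ℓ ∧ Y (i + 1) ℓ ≤ Y i 0 ∧
      Y (i + 1) ℓ ≤ x (i + 1) ℓ) ∧
    ∀ y : ℕ → Fin (L + 1) → ℝ,
      (∀ ℓ, 0 ≤ y 0 ℓ ∧ y 0 ℓ ≤ 1 ∧ y 0 ℓ ≤ x 0 ℓ) →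
      (∀ i, i + 1 ≤ N → ∀ ℓ, 0 ≤ y (i + 1) ℓ ∧ y (i + 1) ℓ ≤ y i 0 ∧
        y (i + 1) ℓ ≤ x (i + 1) ℓ) →
      (∑ i ∈ Finset.range (N + 1), ∑ ℓ, c i ℓ * Y i ℓ)
        ≤ ∑ i ∈ Finset.range (N + 1), ∑ ℓ, c i ℓ * y i ℓ := by
  -- nonnegativity of Y on indices ≤ N
  have hYnn : ∀ i ≤ N, ∀ ℓ, 0 ≤ Y i ℓ := by
    intro i
    induction i with
    | zero =>
      intro _ ℓ
      rw [hY0]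
      exact le_min zero_le_one ((hx 0 (Nat.zero_le _) ℓ).1)
    | succ n ih =>
      intro hn ℓ
      rw [hYs]
      exact le_min (ih (Nat.le_of_succ_le hn) 0)
        ((hx (n + 1) hn ℓ).1)
  refine ⟨?_, ?_, ?_⟩
  · intro ℓ
    rw [hY0]
    exact ⟨le_min zero_le_one (hx 0 (Nat.zero_le _) ℓ).1, min_le_left _ _, min_le_right _ _⟩
  · intro i hi ℓ
    rw [hYs]
    exact ⟨le_min (hYnn i (Nat.le_of_succ_le hi) 0) (hx (i + 1) hi ℓ).1,
      min_le_left _ _, min_le_right _ _⟩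
  · intro y h0 hs
    have key : ∀ i ≤ N, ∀ ℓ, y i ℓ ≤ Y i ℓ := by
      intro i
      induction i with
      | zero =>
        intro _ ℓ
        rw [hY0]
        exact le_min (h0 ℓ).2.1 (h0 ℓ).2.2
      | succ n ih =>
        intro hn ℓ
        rw [hYs]
        exact le_min (le_trans (hs n hn ℓ).2.1 (ih (Nat.le_of_succ_le hn) 0))
          (hs n hn ℓ).2.2
    refine Finset.sum_le_sum fun i hi => Finset.sum_le_sum fun ℓ _ => ?_
    have hiN : i ≤ N := Nat.lt_succ_iff.mp (Finset.mem_range.mp hi)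
    exact mul_le_mul_of_nonpos_left (key i hiN ℓ) (hc i hiN ℓ)
end

section
/- In the two-label single-ray relaxation with costs c_i ≤ 0 on the occupied label (i = 0,...,N) and relaxed constraints 0 ≤ y_i ≤ y_{i-1}^f, y_i ≤ x_i, 0 ≤ y_i^f ≤ y_{i-1}^f, y_i^f ≤ 1 − x_i, x_i ∈ [0,1], y_{-1}^f = 1, the optimal binary value equals min(0, min_i c_i), while the relaxed LP optimum is at most (1/2)∑_i c_i. In particular, if (1/2)∑_i c_i < min(0, min_i c_i), the relaxation is strictly below the binary optimum. -/
/-- Relaxed feasibility for the two-label single-ray problem with positions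
`0,…,N` and `y_{-1}^f = 1`. -/
def relaxFeas (N : ℕ) (x y yf : ℕ → ℝ) : Prop :=
  (∀ i ≤ N, 0 ≤ x i ∧ x i ≤ 1 ∧ 0 ≤ y i ∧ 0 ≤ yf i ∧ y i ≤ x i ∧ yf i ≤ 1 - x i) ∧
  y 0 ≤ 1 ∧ yf 0 ≤ 1 ∧
  ∀ i, i + 1 ≤ N → y (i + 1) ≤ yf i ∧ yf (i + 1) ≤ yf i

/-- Free-space visibility induced by occupancy indicators `x` (`y_{-1}^f = 1`). -/
noncomputable def binYf (x : ℕ → ℝ) : ℕ → ℝ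
  | 0 => min 1 (1 - x 0)
  | i + 1 => min (binYf x i) (1 - x (i + 1))

/-- First-occupied-voxel indicator induced by occupancy indicators `x`. -/
noncomputable def binY (x : ℕ → ℝ) : ℕ → ℝ
  | 0 => min 1 (x 0)
  | i + 1 => min (binYf x i) (x (i + 1))

lemma bin_invariant (N : ℕ) (x : ℕ → ℝ) (hx : ∀ i ≤ N, x i = 0 ∨ x i = 1) :
    ∀ i, i ≤ N → (binYf x i = 0 ∨ binYf x i = 1) ∧
      binYf x i + ∑ k ∈ Finset.range (i + 1), binY x k = 1 ∧
      (∀ k ≤ i, 0 ≤ binY x k) := by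
  intro i
  induction i with
  | zero =>
    intro h0
    rcases hx 0 h0 with h | h <;>
      simp [binYf, binY, h] <;> intro k hk <;> simp [Nat.le_zero.mp hk, binY, h]
  | succ n ih =>
    intro hn
    obtain ⟨h01, hsum, hpos⟩ := ih (Nat.le_of_succ_le hn)
    have hb := hx (n + 1) hn
    constructor
    · rcases h01 with h | h <;> rcases hb with h' | h' <;>
        simp [binYf, h, h']
    constructor
    · rw [Finset.sum_range_succ, show binY x (n+1) = min (binYf x n) (x (n+1)) from rfl,
        show binYf x (n+1) = min (binYf x n) (1 - x (n+1)) from rfl]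
      rcases h01 with h | h <;> rcases hb with h' | h' <;>
        rw [h, h'] <;> simp_all <;> linarith
    · intro k hk
      rcases Nat.lt_succ_iff_lt_or_eq.mp (Nat.lt_succ_of_le hk) with h | h
      · exact hpos k (Nat.lt_succ_iff.mp h)
      · subst h
        rw [show binY x (n+1) = min (binYf x n) (x (n+1)) from rfl]
        rcases h01 with h | h <;> rcases hb with h' | h' <;> rw [h, h'] <;> norm_num

lemma indicator_binY (j : ℕ) :
    ∀ i, (binYf (fun k => if k = j then 1 else 0) i = if j ≤ i then 0 else 1) ∧
      (binY (fun k => if k = j then 1 else 0) i = if i = j then 1 else 0) := by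
  intro i
  induction i with
  | zero =>
    by_cases h : j = 0 <;> simp [binYf, binY, h, Nat.le_zero, eq_comm]
  | succ n ih =>
    obtain ⟨hf, _⟩ := ih
    constructor
    · simp only [binYf]; rw [hf]
      by_cases h1 : j ≤ n
      · simp [h1, Nat.le_succ_of_le h1]
        by_cases h2 : n + 1 = j <;> simp [h2]
      · simp [h1]
        by_cases h2 : n + 1 = j
        · simp [h2, le_refl]
        · have : ¬ j ≤ n + 1 := by omega
          simp [h2, this]
    · simp only [binY]; rw [hf]
      by_cases h2 : n + 1 = j
      · have : ¬ j ≤ n := by omega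
        simp [h2, this]
      · by_cases h1 : j ≤ n <;> simp [h1, h2]

/-- with non-positive costs `c_i`, the optimal binary value of the
two-label ray potential equals `min(0, min_i c_i)`; the relaxed LP admits a
feasible point of value `(1/2)∑ c_i`; hence if `(1/2)∑ c_i < min(0, min_i c_i)`
the relaxation is strictly below the binary optimum. -/
theorem stmt10 (N : ℕ) (c : ℕ → ℝ) (hc : ∀ i ≤ N, c i ≤ 0) :
    IsLeast {v : ℝ | ∃ x : ℕ → ℝ, (∀ i ≤ N, x i = 0 ∨ x i = 1) ∧
        v = ∑ i ∈ Finset.range (N + 1), c i * binY x i}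
      (min 0 ((Finset.range (N + 1)).inf' Finset.nonempty_range_add_one c)) ∧
    (∃ x y yf : ℕ → ℝ, relaxFeas N x y yf ∧
        (∑ i ∈ Finset.range (N + 1), c i * y i)
          = (∑ i ∈ Finset.range (N + 1), c i) / 2) ∧
    ((∑ i ∈ Finset.range (N + 1), c i) / 2
        < min 0 ((Finset.range (N + 1)).inf' Finset.nonempty_range_add_one c) →
      ∃ x y yf : ℕ → ℝ, relaxFeas N x y yf ∧
        (∑ i ∈ Finset.range (N + 1), c i * y i)
          < min 0 ((Finset.range (N + 1)).inf' Finset.nonempty_range_add_one c)) := by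
  set m := (Finset.range (N + 1)).inf' Finset.nonempty_range_add_one c with hm
  obtain ⟨j, hj, hjm⟩ := Finset.exists_mem_eq_inf' Finset.nonempty_range_add_one c
  rw [Finset.mem_range, Nat.lt_succ_iff] at hj
  have hm0 : m ≤ 0 := by
    have := Finset.inf'_le c (Finset.mem_range.mpr (Nat.lt_succ_of_le hj))
    exact le_trans this (hc j hj)
  have hmin : min 0 m = m := min_eq_right hm0
  have hmle : ∀ i ≤ N, m ≤ c i := fun i hi =>
    Finset.inf'_le c (Finset.mem_range.mpr (Nat.lt_succ_of_le hi))
  have relax : ∃ x y yf : ℕ → ℝ, relaxFeas N x y yf ∧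
      (∑ i ∈ Finset.range (N + 1), c i * y i)
        = (∑ i ∈ Finset.range (N + 1), c i) / 2 := by
    refine ⟨fun _ => 1/2, fun _ => 1/2, fun _ => 1/2, ?_, ?_⟩
    · refine ⟨fun i _ => by norm_num, by norm_num, by norm_num, fun i _ => by norm_num⟩
    · rw [← Finset.sum_mul]; ring
  refine ⟨⟨?_, ?_⟩, relax, ?_⟩
  · -- membership: indicator of j
    refine ⟨fun k => if k = j then 1 else 0, fun i _ => by by_cases h : i = j <;> simp [h], ?_⟩
    rw [hmin, hm, hjm]
    rw [Finset.sum_eq_single j]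
    · rw [(indicator_binY j j).2]; simp
    · intro i _ hij
      rw [(indicator_binY j i).2]; simp [hij]
    · intro h; exact absurd (Finset.mem_range.mpr (Nat.lt_succ_of_le hj)) h
  · -- lower bound
    rintro v ⟨x, hx, rfl⟩
    rw [hmin]
    have key : ∀ i ≤ N, (binYf x i = 0 ∨ binYf x i = 1) ∧
        binYf x i + ∑ k ∈ Finset.range (i + 1), binY x k = 1 ∧
        (∀ k ≤ i, 0 ≤ binY x k) := bin_invariant N x hx
    obtain ⟨hf01, hsum, hpos⟩ := key N le_rfl
    have hsle : ∑ k ∈ Finset.range (N + 1), binY x k ≤ 1 := by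
      rcases hf01 with h | h <;> linarith
    have hterm : ∀ i ∈ Finset.range (N + 1), m * binY x i ≤ c i * binY x i := by
      intro i hi
      rw [Finset.mem_range, Nat.lt_succ_iff] at hi
      exact mul_le_mul_of_nonneg_right (hmle i hi) (hpos i hi)
    calc m = m * 1 := (mul_one m).symm
      _ ≤ m * ∑ k ∈ Finset.range (N + 1), binY x k := by
          apply mul_le_mul_of_nonpos_left hsle hm0
      _ = ∑ k ∈ Finset.range (N + 1), m * binY x k := Finset.mul_sum _ _ _
      _ ≤ ∑ i ∈ Finset.range (N + 1), c i * binY x i := Finset.sum_le_sum hterm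
  · intro hlt
    obtain ⟨x, y, yf, hfeas, heq⟩ := relax
    exact ⟨x, y, yf, hfeas, heq ▸ hlt⟩
end
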